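/- Let s : ℕⁿ → R, f ∈ R[X₁,…,Xₙ] nonzero, and a ∈ ℕⁿ. Then X^a·f* ∈ Ann(s) (under left-shifting) if and only if Supp(f·Γ(s)) ⊆ [0, a + deg f), where [0,b) = {c ∈ ℤⁿ : 0 ≤ c, c ≱ b}. In particular, if Supp(f·Γ(s)) ⊆ [0, deg f), then f* ∈ Ann(s). -/

import Mathlib

/-!
The coefficient of `X^(b + a + deg f)` in `f·Γ(s)` is `∑_d f_d s_{b + a + deg f - d}`, and since every
exponent `d` of `f` satisfies `d ≤ deg f` this is exactly `(X^a f* ∘ s)_b`. So the coefficients of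
`f·Γ(s)` at the exponents `≥ a + deg f` are precisely the entries of `X^a f* ∘ s`.
-/

noncomputable section

variable {R : Type*}

/-- Left-shift action of `R[X₁,…,Xₙ]` on sequences indexed by `ℕⁿ`: `(X^a ∘ s)_c = s_{c+a}`. -/
def shiftLF [CommSemiring R] {n : ℕ} (f : MvPolynomial (Fin n) R) (s : (Fin n →₀ ℕ) → R) :
    (Fin n →₀ ℕ) → R :=
  fun b => ∑ a ∈ f.support, f.coeff a * s (b + a)

/-- Vector of partial degrees `δᵢ f`, as a finitely supported function. -/
def degE [CommSemiring R] {n : ℕ} (f : MvPolynomial (Fin n) R) : Fin n →₀ ℕ :=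
  Finsupp.equivFunOnFinite.symm fun i => f.support.sup fun a => a i

/-- The reciprocal polynomial `f* = X^{deg f}·f(X₁⁻¹,…,Xₙ⁻¹)`. -/
def recipP [CommSemiring R] {n : ℕ} (f : MvPolynomial (Fin n) R) : MvPolynomial (Fin n) R :=
  ∑ a ∈ f.support, MvPolynomial.monomial (degE f - a) (f.coeff a)

/-- Coefficient function of the product `f·Γ(s)` in the power series ring `R[[X₁,…,Xₙ]]`,
where `Γ(s) = ∑_{a ≥ 0} s_a X^a`. -/
def polyMulN [CommSemiring R] {n : ℕ} (f : MvPolynomial (Fin n) R) (G : (Fin n →₀ ℕ) → R) :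
    (Fin n →₀ ℕ) → R :=
  fun c => ∑ a ∈ f.support, f.coeff a * (if a ≤ c then G (c - a) else 0)

open MvPolynomial

lemma comp_add_right_eq_zero_iff {M N : Type*} [AddCommMagma M] [Preorder M]
    [CanonicallyOrderedAdd M] [Zero N] (φ : M → N) (e : M) :
    (fun b => φ (b + e)) = 0 ↔ ∀ c, φ c ≠ 0 → ¬ e ≤ c := by
  constructor
  · rintro h c hc hle
    obtain ⟨b, rfl⟩ := le_iff_exists_add'.mp hle
    exact hc (congrFun h b)
  · intro h
    funext b
    by_contra hb
    exact h _ hb le_add_self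

section

variable [CommSemiring R] {n : ℕ}

lemma shiftLF_eq_sum_of_support_subset (g : MvPolynomial (Fin n) R) (s : (Fin n →₀ ℕ) → R)
    (b : Fin n →₀ ℕ) {T : Finset (Fin n →₀ ℕ)} (hT : g.support ⊆ T) :
    shiftLF g s b = ∑ m ∈ T, coeff m g * s (b + m) :=
  Finset.sum_subset hT fun m _ hm => by rw [notMem_support_iff.mp hm, zero_mul]

lemma shiftLF_add (p q : MvPolynomial (Fin n) R) (s : (Fin n →₀ ℕ) → R) (b : Fin n →₀ ℕ) :
    shiftLF (p + q) s b = shiftLF p s b + shiftLF q s b := by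
  rw [shiftLF_eq_sum_of_support_subset _ s b support_add,
    shiftLF_eq_sum_of_support_subset p s b Finset.subset_union_left,
    shiftLF_eq_sum_of_support_subset q s b Finset.subset_union_right, ← Finset.sum_add_distrib]
  simp only [coeff_add, add_mul]

lemma shiftLF_monomial (m : Fin n →₀ ℕ) (r : R) (s : (Fin n →₀ ℕ) → R) (b : Fin n →₀ ℕ) :
    shiftLF (monomial m r) s b = r * s (b + m) := by
  simp [shiftLF_eq_sum_of_support_subset _ s b support_monomial_subset, coeff_monomial]

lemma shiftLF_sum_monomial {ι : Type*} (t : Finset ι) (e : ι → Fin n →₀ ℕ) (r : ι → R)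
    (s : (Fin n →₀ ℕ) → R) (b : Fin n →₀ ℕ) :
    shiftLF (∑ i ∈ t, monomial (e i) (r i)) s b = ∑ i ∈ t, r i * s (b + e i) := by
  classical
  induction t using Finset.induction_on with
  | empty => simp [shiftLF]
  | insert i t hi ih =>
    rw [Finset.sum_insert hi, Finset.sum_insert hi, shiftLF_add, ih, shiftLF_monomial]

lemma le_degE_of_mem_support {f : MvPolynomial (Fin n) R} {d : Fin n →₀ ℕ}
    (hd : d ∈ f.support) : d ≤ degE f := fun i => by
  simpa only [degE, Finsupp.coe_equivFunOnFinite_symm] using Finset.le_sup (f := fun a => a i) hd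

lemma monomial_mul_recipP (a : Fin n →₀ ℕ) (f : MvPolynomial (Fin n) R) :
    monomial a 1 * recipP f = ∑ d ∈ f.support, monomial (a + (degE f - d)) (f.coeff d) := by
  simp only [recipP, Finset.mul_sum, monomial_mul, one_mul]

lemma shiftLF_monomial_mul_recipP (a : Fin n →₀ ℕ) (f : MvPolynomial (Fin n) R)
    (s : (Fin n →₀ ℕ) → R) (b : Fin n →₀ ℕ) :
    shiftLF (monomial a 1 * recipP f) s b = polyMulN f s (b + (a + degE f)) := by
  rw [monomial_mul_recipP, shiftLF_sum_monomial, polyMulN]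
  refine Finset.sum_congr rfl fun d hd => ?_
  have hdeg : d ≤ degE f := le_degE_of_mem_support hd
  have hle : d ≤ a + degE f := hdeg.trans le_add_self
  rw [if_pos (hle.trans le_add_self), add_tsub_assoc_of_le hle, add_tsub_assoc_of_le hdeg]

lemma shiftLF_monomial_mul_recipP_eq_zero_iff (a : Fin n →₀ ℕ)
    (f : MvPolynomial (Fin n) R) (s : (Fin n →₀ ℕ) → R) :
    shiftLF (monomial a 1 * recipP f) s = 0 ↔ ∀ c, polyMulN f s c ≠ 0 → ¬ a + degE f ≤ c := by
  rw [← comp_add_right_eq_zero_iff, funext (shiftLF_monomial_mul_recipP a f s)]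

end

theorem stmt5_general [CommRing R] {n : ℕ} (s : (Fin n →₀ ℕ) → R) (f : MvPolynomial (Fin n) R)
    (a : Fin n →₀ ℕ) :
    (shiftLF (MvPolynomial.monomial a 1 * recipP f) s = 0 ↔
      ∀ c : Fin n →₀ ℕ, polyMulN f s c ≠ 0 → ¬ a + degE f ≤ c) ∧
    ((∀ c : Fin n →₀ ℕ, polyMulN f s c ≠ 0 → ¬ degE f ≤ c) → shiftLF (recipP f) s = 0) := by
  refine ⟨shiftLF_monomial_mul_recipP_eq_zero_iff a f s, fun h => ?_⟩
  simpa using (shiftLF_monomial_mul_recipP_eq_zero_iff 0 f s).mpr (by simpa using h)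

/-- `X^a·f* ∈ Ann(s)` (left-shifting) iff `Supp(f·Γ(s)) ⊆ [0, a + deg f)`;
in particular `Supp(f·Γ(s)) ⊆ [0, deg f)` implies `f* ∈ Ann(s)`. -/
theorem stmt5 [CommRing R] {n : ℕ} (s : (Fin n →₀ ℕ) → R) (f : MvPolynomial (Fin n) R)
    (hf : f ≠ 0) (a : Fin n →₀ ℕ) :
    (shiftLF (MvPolynomial.monomial a 1 * recipP f) s = 0 ↔
      ∀ c : Fin n →₀ ℕ, polyMulN f s c ≠ 0 → ¬ a + degE f ≤ c) ∧
    ((∀ c : Fin n →₀ ℕ, polyMulN f s c ≠ 0 → ¬ degE f ≤ c) → shiftLF (recipP f) s = 0) :=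
  stmt5_general s f a
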